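/- arXiv:1809.05013 — 5 statements merged into one kernel-verified Lean document; each statement's English description precedes it below -/
import Mathlib

section
/- The Relay Reversal rule preserves weak connectivity: if G is a weakly connected relay graph in which a process u owns relays r and s with r ≠ s and r has no incoming relay connections, then the graph G' obtained by adding an implicit edge (r, s) and then deleting the edge (u, r) (while keeping vertex r until its buffer empties, with r still connected to its outgoing target) is weakly connected. -/
/-- Weak connectivity of a directed graph given by an edge relation. -/
def wcP {V : Type*} (E : V → V → Prop) : Prop :=
  ∀ a b : V, Relation.ReflTransGen (fun x y => E x y ∨ E y x) a b

open Relation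

theorem wcP.of_forall_edge_reflTransGen {V : Type*} {E E' : V → V → Prop}
    (hedge : ∀ x y, E x y → ReflTransGen (SymmGen E') x y) (hwc : wcP E) : wcP E' := by
  intro a b
  refine ReflTransGen.lift' id (fun x y hxy => ?_) a b (hwc a b)
  rcases hxy with hxy | hyx
  · exact hedge x y hxy
  · exact Std.Symm.symm (r := ReflTransGen (SymmGen E')) _ _ (hedge y x hyx)

theorem relayReversal_preserves_weak_connectivity_general {V : Type*}
    (E : V → V → Prop) (u r s : V)
    (hus : E u s) (hrs : r ≠ s)
    (hwc : wcP E) :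
    wcP (fun x y => (E x y ∧ ¬(x = u ∧ y = r)) ∨ (x = r ∧ y = s)) := by
  refine wcP.of_forall_edge_reflTransGen (fun x y hxy => ?_) hwc
  by_cases hdeleted : x = u ∧ y = r
  · obtain ⟨rfl, rfl⟩ := hdeleted
    -- the deleted edge `u → r` is bypassed by `u → s` followed by the new edge `r → s`, reversed
    exact .tail (.single (.inl (.inl ⟨hus, fun h => hrs h.2.symm⟩))) (.inr (.inr ⟨rfl, rfl⟩))
  · exact .single (.inl (.inl ⟨hxy, hdeleted⟩))

/-- Relay Reversal preserves weak connectivity: if process `u` owns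
relays `r ≠ s`, `r` has no incoming connections (its only incoming edge is the
ownership edge from `u`), then adding the implicit edge `(r,s)` and deleting the
edge `(u,r)` (keeping `r` with its outgoing connection) yields a weakly connected
graph. -/
theorem relayReversal_preserves_weak_connectivity {V : Type*}
    (E : V → V → Prop) (u r s t : V)
    (hur : E u r) (hus : E u s) (hrs : r ≠ s) (hrt : E r t)
    (hnoin : ∀ x, E x r → x = u)
    (hwc : wcP E) :
    wcP (fun x y => (E x y ∧ ¬(x = u ∧ y = r)) ∨ (x = r ∧ y = s)) :=
  relayReversal_preserves_weak_connectivity_general E u r s hus hrs hwc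
end

section
/- For any simple relay graph G_R, there is a one-to-one correspondence (up to isomorphism) between simple relay graphs and their corresponding process graphs: given a process multigraph G_P, there is a unique (up to isomorphism) simple relay graph G_R with CPG(G_R) = G_P. -/
/-- A relay graph: a finite type of relays, each owned by a process and having at
most one outgoing connection to another relay (`none` means the relay is a sink). -/
structure RG (P : Type) where
  R : Type
  fintR : Fintype R
  owner : R → P
  out : R → Option R

attribute [instance] RG.fintR

/-- The corresponding process (multi)graph `CPG(G)`: one edge `(owner r, owner s)`
for every relay-to-relay connection `out r = some s`. -/
def cpg {P : Type} (G : RG P) : Multiset (P × P) :=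
  (Finset.univ : Finset G.R).val.filterMap fun r =>
    (G.out r).map fun s => (G.owner r, G.owner s)

/-- A simple relay graph: all relays are direct (non-sink relays point to sinks)
and every sink relay has exactly one incoming connection. -/
def isSimple {P : Type} (G : RG P) : Prop :=
  (∀ r s : G.R, G.out r = some s → G.out s = none) ∧
  (∀ s : G.R, G.out s = none → ∃! r : G.R, G.out r = some s)

/-- `s` is the sink relay reached from `r` by following outgoing connections. -/
def isSinkOf {P : Type} (G : RG P) (r s : G.R) : Prop :=
  Relation.ReflTransGen (fun a b => G.out a = some b) r s ∧ G.out s = none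

/-- Isomorphism of relay graphs (over the same processes). -/
def rgIso {P : Type} (G G' : RG P) : Prop :=
  ∃ e : G.R ≃ G'.R, ∀ x : G.R,
    G'.owner (e x) = G.owner x ∧ G'.out (e x) = Option.map (fun y => e y) (G.out x)

/-- The relays removed when relay `r` (with sink relay `t`) is deleted by Relay
Reversal: `r` itself, together with `t` in case `r` was its only incoming
connection (the deliberate application then deletes the orphaned sink). -/
def revRemoved {P : Type} (G : RG P) (r t : G.R) : Set G.R :=
  {x | x = r ∨ (x = t ∧ ∀ y, y ≠ r → G.out y ≠ some t)}

/-- Relay Introduction (net effect): a process `u` owning relays `r` and `s` sends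
a reference of `s` via `r`; the sink process of `r` (owner of the sink relay `t`)
obtains a new relay `s'` with outgoing connection to `s`. All old relays are kept. -/
def relayIntro {P : Type} (G G' : RG P) : Prop :=
  ∃ (u : P) (r s t : G.R) (s' : G'.R) (F : G.R → G'.R),
    G.owner r = u ∧ G.owner s = u ∧ isSinkOf G r t ∧
    Function.Injective F ∧
    (∀ z : G'.R, z = s' ∨ ∃ x : G.R, F x = z) ∧
    (∀ x : G.R, F x ≠ s') ∧
    (∀ x : G.R, G'.owner (F x) = G.owner x ∧
      G'.out (F x) = Option.map F (G.out x)) ∧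
    G'.owner s' = G.owner t ∧ G'.out s' = some (F s)

/-- Relay Reversal (net effect): a process `u` owning relays `r ≠ s`, where `r` has
no incoming connection, sends a reference via `r` and subsequently deletes `r`.
Either an existing relay `s` of `u` is sent (first disjunct), or `u` creates a
fresh sink relay `q` and sends it (second disjunct); in both cases the sink
process of `r` obtains a new relay pointing to the sent relay, and `r` (together
with its sink relay if thereby orphaned) is deleted. -/
def relayReversal {P : Type} (G G' : RG P) : Prop :=
  ∃ (u : P) (r t : G.R), G.owner r = u ∧ (∀ x : G.R, G.out x ≠ some r) ∧
    isSinkOf G r t ∧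
    ((∃ (s : G.R) (s' : G'.R) (F : G.R → G'.R),
        s ≠ r ∧ G.owner s = u ∧ s ∉ revRemoved G r t ∧
        (∀ x y : G.R, x ∉ revRemoved G r t → y ∉ revRemoved G r t →
          (F x = F y ↔ x = y)) ∧
        (∀ z : G'.R, z = s' ∨ ∃ x : G.R, x ∉ revRemoved G r t ∧ F x = z) ∧
        (∀ x : G.R, x ∉ revRemoved G r t → F x ≠ s') ∧
        (∀ x : G.R, x ∉ revRemoved G r t → G'.owner (F x) = G.owner x ∧
          G'.out (F x) = Option.map F (G.out x)) ∧
        G'.owner s' = G.owner t ∧ G'.out s' = some (F s)) ∨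
     (∃ (q q' : G'.R) (F : G.R → G'.R),
        q ≠ q' ∧
        (∀ x y : G.R, x ∉ revRemoved G r t → y ∉ revRemoved G r t →
          (F x = F y ↔ x = y)) ∧
        (∀ z : G'.R, z = q ∨ z = q' ∨ ∃ x : G.R, x ∉ revRemoved G r t ∧ F x = z) ∧
        (∀ x : G.R, x ∉ revRemoved G r t → F x ≠ q ∧ F x ≠ q') ∧
        (∀ x : G.R, x ∉ revRemoved G r t → G'.owner (F x) = G.owner x ∧
          G'.out (F x) = Option.map F (G.out x)) ∧
        G'.owner q = u ∧ G'.out q = none ∧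
        G'.owner q' = G.owner t ∧ G'.out q' = some q))

/-- Relay Fusion (net effect): two relays `r ≠ r'` of the same process with the
same outgoing target are merged into one. -/
def relayFusion {P : Type} (G G' : RG P) : Prop :=
  ∃ (r r' : G.R) (_ : r ≠ r') (f : G.R → G'.R),
    G.owner r = G.owner r' ∧ G.out r = G.out r' ∧
    Function.Surjective f ∧
    (∀ x y : G.R, f x = f y ↔ (x = y ∨ ({x, y} : Set G.R) = {r, r'})) ∧
    ∀ x : G.R, G'.owner (f x) = G.owner x ∧ G'.out (f x) = Option.map f (G.out x)

/-- Edges of the relay graph seen as a directed graph on processes and relays: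
ownership edges, relay-to-relay edges, and sink-relay-to-process edges. -/
def rgEdge {P : Type} (G : RG P) : (P ⊕ G.R) → (P ⊕ G.R) → Prop := fun a b =>
  (∃ r : G.R, a = Sum.inl (G.owner r) ∧ b = Sum.inr r) ∨
  (∃ r s : G.R, a = Sum.inr r ∧ b = Sum.inr s ∧ G.out r = some s) ∨
  (∃ r : G.R, a = Sum.inr r ∧ G.out r = none ∧ b = Sum.inl (G.owner r))

/-- Weak connectivity of a relay graph. -/
def rgWC {P : Type} (G : RG P) : Prop :=
  ∀ a b : P ⊕ G.R,
    Relation.ReflTransGen (fun x y => rgEdge G x y ∨ rgEdge G y x) a b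

/-!
In a simple relay graph every connection `r → s` ends in a sink `s`, and `r ↦ s` is a bijection
from the non-sink relays onto the sinks. Hence the graph is isomorphic to `RG.ofEdges` of the
family of process edges `(owner r, owner s)` indexed by its non-sink relays, whose `cpg` is the
multiset of these edges. Two finite families with the same multiset of values differ by a
bijection of the index types, which induces an isomorphism of the corresponding `ofEdges`;
conversely `ofEdges` of the elements of any multiset realizes it.
-/

theorem Multiset.exists_equiv_of_map_univ_eq {α β γ : Type*} [Fintype α] [Fintype β]
    {f : α → γ} {g : β → γ}
    (h : (Finset.univ : Finset α).val.map f = (Finset.univ : Finset β).val.map g) :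
    ∃ e : α ≃ β, ∀ a, g (e a) = f a := by
  classical
  have hfiber : ∀ c, Fintype.card {a // f a = c} = Fintype.card {b // g b = c} := by
    intro c
    simpa [Multiset.count_map, Fintype.card_subtype, Finset.card, Finset.filter_val, eq_comm]
      using congrArg (Multiset.count c) h
  exact ⟨Equiv.ofPreimageEquiv fun c => Fintype.equivOfCardEq (hfiber c),
    fun a => Equiv.ofPreimageEquiv_map _ a⟩

theorem Multiset.filterMap_none {α β : Type*} (s : Multiset α) :
    s.filterMap (fun _ => (none : Option β)) = 0 :=
  Quot.inductionOn s fun l => congrArg _ (List.filterMap_none l)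

section
variable {P : Type}

theorem rgIso.symm {G G' : RG P} (h : rgIso G G') : rgIso G' G := by
  obtain ⟨e, he⟩ := h
  refine ⟨e.symm, fun y => ?_⟩
  obtain ⟨x, rfl⟩ := e.surjective y
  obtain ⟨howner, hout⟩ := he x
  refine ⟨by simp [howner], ?_⟩
  simp [hout, Option.map_map, Function.comp_def]

theorem rgIso.trans {G G' G'' : RG P} (h : rgIso G G') (h' : rgIso G' G'') : rgIso G G'' := by
  obtain ⟨e, he⟩ := h
  obtain ⟨e', he'⟩ := h'
  refine ⟨e.trans e', fun x => ⟨?_, ?_⟩⟩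
  · simp [(he' (e x)).1, (he x).1]
  · simp [(he' (e x)).2, (he x).2, Option.map_map, Function.comp_def]

theorem rgIso.cpg_eq {G G' : RG P} (h : rgIso G G') : cpg G = cpg G' := by
  obtain ⟨e, he⟩ := h
  rw [cpg, cpg, ← Multiset.map_univ_val_equiv e, Multiset.filterMap_map]
  have howner : ∀ x, G'.owner (e x) = G.owner x := fun x => (he x).1
  congr 1
  funext x
  simp [howner, (he x).2, Option.map_map, Function.comp_def]

end

namespace RG

def ofEdges {P ι : Type} [Fintype ι] (f : ι → P × P) : RG P where
  R := ι ⊕ ι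
  fintR := inferInstance
  owner := Sum.elim (Prod.fst ∘ f) (Prod.snd ∘ f)
  out := Sum.elim (some ∘ Sum.inr) fun _ => none

variable {P ι κ : Type} [Fintype ι] [Fintype κ]

theorem isSimple_ofEdges (f : ι → P × P) : isSimple (ofEdges f) := by
  refine ⟨?_, ?_⟩
  · rintro (i | i) s h
    · cases Option.some_inj.1 h; rfl
    · cases h
  · rintro (i | i) h
    · cases h
    · refine ⟨Sum.inl i, rfl, ?_⟩
      rintro (j | j) hj
      · cases Option.some_inj.1 hj; rfl
      · cases hj

theorem cpg_ofEdges (f : ι → P × P) : cpg (ofEdges f) = (Finset.univ : Finset ι).val.map f := by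
  have huniv : (Finset.univ : Finset (ι ⊕ ι)).val
      = (Finset.univ : Finset ι).val.map Sum.inl + (Finset.univ : Finset ι).val.map Sum.inr := by
    rw [← Finset.univ_disjSum_univ, Finset.val_disjSum]; rfl
  dsimp only [cpg, ofEdges]
  rw [huniv, Multiset.filterMap_add, Multiset.filterMap_map, Multiset.filterMap_map]
  change Multiset.filterMap (some ∘ f) _ + Multiset.filterMap (fun _ => none) _ = _
  rw [Multiset.filterMap_eq_map, Multiset.filterMap_none, add_zero]

theorem rgIso_ofEdges_of_equiv {f : ι → P × P} {g : κ → P × P} (e : ι ≃ κ)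
    (he : ∀ i, g (e i) = f i) : rgIso (ofEdges f) (ofEdges g) := by
  refine ⟨e.sumCongr e, ?_⟩
  rintro (i | i)
  · exact ⟨congrArg Prod.fst (he i), rfl⟩
  · exact ⟨congrArg Prod.snd (he i), rfl⟩

abbrev Source (G : RG P) : Type := {r : G.R // (G.out r).isSome}

def processEdge (G : RG P) (r : Source G) : P × P :=
  (G.owner r.1, G.owner ((G.out r.1).get r.2))

def sinkOfSource (G : RG P) (hdirect : ∀ r s : G.R, G.out r = some s → G.out s = none)
    (r : Source G) : {s : G.R // ¬ (G.out s).isSome} :=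
  ⟨(G.out r.1).get r.2, by simp [hdirect r.1 _ (Option.some_get r.2).symm]⟩

theorem bijective_sinkOfSource {G : RG P} (hG : isSimple G) :
    Function.Bijective (sinkOfSource G hG.1) := by
  refine ⟨fun a b hab => ?_, fun ⟨s, hs⟩ => ?_⟩
  · have ha : G.out a.1 = some (sinkOfSource G hG.1 a).1 := (Option.some_get a.2).symm
    have hb : G.out b.1 = some (sinkOfSource G hG.1 b).1 := (Option.some_get b.2).symm
    rw [hab] at ha
    obtain ⟨r, -, hunique⟩ := hG.2 _ (hG.1 b.1 _ hb)
    exact Subtype.ext ((hunique a.1 ha).trans (hunique b.1 hb).symm)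
  · obtain ⟨r, hr, -⟩ := hG.2 s (Option.not_isSome_iff_eq_none.1 hs)
    exact ⟨⟨r, by simp [hr]⟩, Subtype.ext (by simp [sinkOfSource, hr])⟩

theorem rgIso_ofEdges_processEdge {G : RG P} (hG : isSimple G) :
    rgIso (ofEdges (processEdge G)) G := by
  let e : Source G ⊕ Source G ≃ G.R :=
    ((Equiv.refl _).sumCongr (Equiv.ofBijective _ (bijective_sinkOfSource hG))).trans
      (Equiv.sumCompl _)
  have hsink : ∀ r, e (Sum.inr r) = (sinkOfSource G hG.1 r).1 := fun _ => rfl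
  have hout : ∀ r : Source G, G.out r.1 = some (e (Sum.inr r)) := fun r =>
    (hsink r).symm ▸ (Option.some_get r.2).symm
  refine ⟨e, ?_⟩
  rintro (r | r)
  · exact ⟨rfl, hout r⟩
  · exact ⟨rfl, hG.1 r.1 _ (hout r)⟩

end RG

/-- One-to-one correspondence (up to isomorphism) between simple relay
graphs and process multigraphs: every process multigraph `GP` is `CPG` of some
simple relay graph, and any two simple relay graphs with the same `CPG` are
isomorphic. -/
theorem simple_relay_graph_process_graph_correspondence {P : Type}
    (GP : Multiset (P × P)) :
    (∃ G : RG P, isSimple G ∧ cpg G = GP) ∧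
    (∀ G1 G2 : RG P, isSimple G1 → isSimple G2 →
      cpg G1 = GP → cpg G2 = GP → rgIso G1 G2) := by
  classical
  refine ⟨⟨RG.ofEdges fun x : GP => (x : P × P), RG.isSimple_ofEdges _, ?_⟩, ?_⟩
  · rw [RG.cpg_ofEdges, Multiset.map_univ_coe]
  intro G1 G2 h1 h2 hc1 hc2
  have iso1 : rgIso _ G1 := RG.rgIso_ofEdges_processEdge h1
  have iso2 : rgIso _ G2 := RG.rgIso_ofEdges_processEdge h2
  have hedges : (Finset.univ : Finset G1.Source).val.map G1.processEdge
      = (Finset.univ : Finset G2.Source).val.map G2.processEdge := by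
    rw [← RG.cpg_ofEdges, ← RG.cpg_ofEdges, iso1.cpg_eq, iso2.cpg_eq, hc1, hc2]
  obtain ⟨e, he⟩ := Multiset.exists_equiv_of_map_univ_eq hedges
  exact iso1.symm.trans ((RG.rgIso_ofEdges_of_equiv e he).trans iso2)
end

section
/- The relay rules Relay Introduction and Relay Reversal together emulate the process rule Introduction: for every simple relay graph G_R and every application of Introduction to CPG(G_R) producing process graph G_P', there is a simple relay graph G_R' with CPG(G_R') = G_P' obtainable from G_R by applying Relay Introduction once followed by Relay Reversal once. -/
/-!
Say `u` reaches `v` through a relay `a → b` and `w` through a relay `c → d`. Relay Introduction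
lets `u` send `a` along `c`, so `w` gets a new relay pointing to `a`. Relay Reversal on that new
relay has `w` create a fresh sink and send it to the sink process `v` of the new relay, then
delete the new relay; its sink `b` survives because `a` still points to it. What remains is `G`
plus one direct connection from a new relay of `v` to a new sink of `w`: still simple, and it
adds exactly the edge `(v, w)` to the process graph.
-/

lemma mem_cpg {P : Type} (G : RG P) (p : P × P) :
    p ∈ cpg G ↔ ∃ r s : G.R, G.out r = some s ∧ G.owner r = p.1 ∧ G.owner s = p.2 := by
  simp only [cpg, Multiset.mem_filterMap, Finset.mem_val, Finset.mem_univ, true_and,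
    Option.map_eq_some_iff]
  constructor
  · rintro ⟨r, s, hs, rfl⟩
    exact ⟨r, s, hs, rfl, rfl⟩
  · rintro ⟨r, s, hs, h1, h2⟩
    exact ⟨r, s, hs, by rw [h1, h2]⟩

lemma isSimple.isSinkOf {P : Type} {G : RG P} (hG : isSimple G) {r s : G.R}
    (h : G.out r = some s) : isSinkOf G r s :=
  ⟨.single h, hG.1 r s h⟩

lemma Multiset.filterMap_univ_option {α β : Type*} [Fintype α] (f : Option α → Option β) :
    (Finset.univ : Finset (Option α)).val.filterMap f
      = ↑(f none).toList + (Finset.univ : Finset α).val.filterMap (f ∘ some) := by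
  rw [show (Finset.univ : Finset (Option α)).val = none ::ₘ Finset.univ.val.map some from rfl]
  cases h : f none
  · rw [Multiset.filterMap_cons_none _ _ h, Multiset.filterMap_map]; simp
  · rw [Multiset.filterMap_cons_some _ _ _ h, Multiset.filterMap_map]; simp

namespace RG

variable {P : Type}

-- Reducible, so that `simp` and `rintro` see `(G.addRelay p o).R` as `Option G.R`.
abbrev addRelay (G : RG P) (p : P) (o : Option G.R) : RG P where
  R := Option G.R
  fintR := inferInstance
  owner x := x.elim p G.owner
  out x := x.elim (o.map some) fun y => (G.out y).map some

def addEdge (G : RG P) (p q : P) : RG P :=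
  (G.addRelay q none).addRelay p (some none)

variable (G : RG P) (p : P) (o : Option G.R)

lemma cpg_addRelay :
    cpg (G.addRelay p o) = ↑(o.map fun s => (p, G.owner s)).toList + cpg G := by
  refine (Multiset.filterMap_univ_option (α := G.R) _).trans ?_
  congr 1
  · cases o <;> rfl
  · unfold cpg
    congr 1
    funext r
    exact Option.map_map _ _ _

lemma cpg_addEdge (q : P) : cpg (G.addEdge p q) = (p, q) ::ₘ cpg G := by
  simp [addEdge, cpg_addRelay]

lemma addRelay_out_ne_some_none (x : (G.addRelay p o).R) :
    (G.addRelay p o).out x ≠ some none := by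
  cases x <;> simp

lemma isSinkOf_addRelay_some {s t : G.R} (h : isSinkOf G s t) :
    isSinkOf (G.addRelay p o) (some s) (some t) :=
  ⟨h.1.lift some fun _ _ hab => by simp [Function.onFun, hab], by simp [h.2]⟩

lemma isSinkOf_addRelay_none {s t : G.R} (h : isSinkOf G s t) :
    isSinkOf (G.addRelay p (some s)) none (some t) :=
  have ⟨hpath, hsink⟩ := isSinkOf_addRelay_some G p (some s) h
  ⟨.head rfl hpath, hsink⟩

lemma relayIntro_addRelay {r s t : G.R} (hrs : G.owner r = G.owner s) (hrt : isSinkOf G r t) :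
    relayIntro G (G.addRelay (G.owner t) (some s)) := by
  refine ⟨G.owner r, r, s, t, none, some, rfl, hrs.symm, hrt, Option.some_injective _, ?_,
    Option.some_ne_none, fun _ => ⟨rfl, rfl⟩, rfl, rfl⟩
  rintro (_ | x)
  exacts [.inl rfl, .inr ⟨x, rfl⟩]

lemma notMem_revRemoved_addRelay_none_iff {s t : G.R} (ht : ∃ y, G.out y = some t)
    (x : (G.addRelay p (some s)).R) :
    x ∉ revRemoved (G.addRelay p (some s)) none (some t) ↔ x ≠ none := by
  obtain ⟨y, hy⟩ := ht
  refine ⟨fun hx h => hx (.inl h), fun hx h => ?_⟩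
  rcases h with h | ⟨-, h⟩
  · exact hx h
  · exact h (some y) (Option.some_ne_none y) (by simp [hy])

lemma relayReversal_addRelay_addEdge {s t : G.R} (hst : isSinkOf G s t)
    (ht : ∃ y, G.out y = some t) :
    relayReversal (G.addRelay p (some s)) (G.addEdge (G.owner t) p) := by
  have hkeep := notMem_revRemoved_addRelay_none_iff G p (s := s) ht
  refine ⟨p, none, some t, rfl, addRelay_out_ne_some_none G p _, isSinkOf_addRelay_none G p hst,
    .inr ⟨some none, none, Option.map some, Option.some_ne_none _,
      fun x y _ _ => (Option.map_injective (Option.some_injective _)).eq_iff, ?_, ?_, ?_,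
      rfl, rfl, rfl, rfl⟩⟩
  · rintro (_ | _ | y)
    exacts [.inr (.inl rfl), .inl rfl,
      .inr (.inr ⟨some y, (hkeep _).2 (Option.some_ne_none y), rfl⟩)]
  · rintro (_ | y) hx
    · exact absurd rfl ((hkeep _).1 hx)
    · exact ⟨fun h => Option.some_ne_none y (Option.some.inj h), Option.some_ne_none _⟩
  · rintro (_ | y) hx
    · exact absurd rfl ((hkeep _).1 hx)
    · simp [addEdge, Option.map_map, Function.comp_def]

end RG

lemma isSimple.addEdge {P : Type} {G : RG P} (hG : isSimple G) (p q : P) :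
    isSimple (G.addEdge p q) := by
  constructor
  · rintro (_ | _ | r) y h
    · cases h
      rfl
    · cases h
    · simp only [RG.addEdge, Option.elim_some, Option.map_map] at h
      obtain ⟨y', hy', rfl⟩ := Option.map_eq_some_iff.1 h
      simp [RG.addEdge, hG.1 r y' hy']
  · rintro (_ | _ | s) hs
    · cases hs
    · refine ⟨none, rfl, ?_⟩
      rintro (_ | _ | x) hx
      · rfl
      · cases hx
      · simp [RG.addEdge] at hx
    · simp only [RG.addEdge, Option.elim_some, Option.map_eq_none_iff] at hs
      obtain ⟨r, hr, huniq⟩ := hG.2 s hs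
      refine ⟨some (some r), by simp [RG.addEdge, hr], ?_⟩
      rintro (_ | _ | x) hx
      · cases hx
      · cases hx
      · simp only [RG.addEdge, Option.elim_some, Option.map_map, Option.map_eq_some_iff] at hx
        obtain ⟨y, hy, hys⟩ := hx
        obtain rfl : y = s := by simpa using hys
        rw [huniq x hy]

/-- Relay Introduction and Relay Reversal emulate the process rule
Introduction: for every simple relay graph `G` and every application of
Introduction to `CPG(G)` (a process `u` with edges to `v` and `w` adds an edge
`(v,w)`), a simple relay graph whose `CPG` is the result is obtained from `G` by
one Relay Introduction followed by one Relay Reversal. -/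
theorem relay_rules_emulate_Introduction {P : Type} (G : RG P)
    (hG : isSimple G) (E' : Multiset (P × P))
    (hstep : ∃ u v w : P, (u, v) ∈ cpg G ∧ (u, w) ∈ cpg G ∧
      E' = (v, w) ::ₘ cpg G) :
    ∃ G1 G2 : RG P, relayIntro G G1 ∧ relayReversal G1 G2 ∧
      isSimple G2 ∧ cpg G2 = E' := by
  obtain ⟨u, v, w, huv, huw, rfl⟩ := hstep
  obtain ⟨a, b, hab, hau, rfl⟩ := (mem_cpg G _).1 huv
  obtain ⟨c, d, hcd, hcu, rfl⟩ := (mem_cpg G _).1 huw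
  refine ⟨G.addRelay (G.owner d) (some a), G.addEdge (G.owner b) (G.owner d),
    RG.relayIntro_addRelay G (hcu.trans hau.symm) (hG.isSinkOf hcd),
    RG.relayReversal_addRelay_addEdge G _ (hG.isSinkOf hab) ⟨a, hab⟩,
    hG.addEdge _ _, RG.cpg_addEdge G _ _⟩
end

section
/- In a tree T rooted at a sink relay s, the broadcast-and-reverse procedure terminates and reconstructs T: processing levels L_T(0), L_T(1), ..., in ascending order, where at each level every process holding a relay r sends its received relay to the processes holding children of r and closes the relays used for sending, yields after |depth(T)| rounds a relay graph isomorphic to T. -/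
/-- The edges of the target tree `T`, read as process-graph edges from the owner of
the parent relay to the owner of the child relay. -/
def tEdges {P : Type} (GT : RG P) : Multiset (P × P) :=
  (Finset.univ : Finset GT.R).val.filterMap fun r =>
    (GT.out r).map fun p => (GT.owner p, GT.owner r)

/-!
Relay Reversal along the direct relay from the owner of `p` to the owner of a child `c` of `p`
rebuilds the tree relay `c → p`: the owner of `p` sends its copy of `p`, so the owner of `c`
gets a relay pointing to it, while the used direct relay and its orphaned sink disappear. Every
intermediate configuration therefore consists of the relays of an upward-closed set `D ∋ s` of
`T`, already rebuilt, together with the relay pairs of `G₂` serving the relays outside `D`; it is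
a subgraph of the disjoint union `T ⊕ G₂`. The first reversal creates the copy of the root as a
fresh sink, each later one adds a relay of `T` whose parent lies in `D`, and once `D` is all of `T`
the configuration is `T` itself. The pairs of `G₂` match the non-root relays of `T` bijectively
because `CPG(G₂)` and the edge multiset of `T` agree.
-/

theorem Multiset.count_filterMap {α β : Type*} [DecidableEq β] (f : α → Option β)
    (s : Multiset α) (b : β) : count b (filterMap f s) = countP (fun a => f a = some b) s :=
  Quot.inductionOn s fun l => by
    simpa [List.count_filterMap] using List.countP_congr fun a _ => by simp

theorem exists_equiv_isSome_of_filterMap_univ_eq {α β γ : Type*} [Fintype α] [Fintype β]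
    {f : α → Option γ} {g : β → Option γ}
    (h : (Finset.univ : Finset α).val.filterMap f = (Finset.univ : Finset β).val.filterMap g) :
    ∃ e : {a // (f a).isSome} ≃ {b // (g b).isSome}, ∀ a, g (e a) = f a := by
  classical
  have hcard : ∀ c, Fintype.card {a // f a = some c} = Fintype.card {b // g b = some c} := by
    intro c
    have := congrArg (Multiset.count c) h
    simpa [Multiset.count_filterMap, Multiset.countP_eq_card_filter, Fintype.card_subtype,
      Finset.card_def] using this
  have hfiber : ∀ y, Fintype.card {a : {a // (f a).isSome} // f a = y} =
      Fintype.card {b : {b // (g b).isSome} // g b = y} := by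
    rintro (_ | c)
    · rw [Fintype.card_eq_zero_iff.2 ⟨fun a => absurd a.1.2 (by simp [a.2])⟩,
        Fintype.card_eq_zero_iff.2 ⟨fun b => absurd b.1.2 (by simp [b.2])⟩]
    · simpa only [Fintype.card_congr (Equiv.subtypeSubtypeEquivSubtype
        fun {x} (hx : _ = some c) => Option.isSome_iff_exists.2 ⟨c, hx⟩)] using hcard c
  exact ⟨Equiv.ofFiberEquiv fun y => Fintype.equivOfCardEq (hfiber y),
    Equiv.ofFiberEquiv_map (f := fun a : {a // (f a).isSome} => f a)
      (g := fun b : {b // (g b).isSome} => g b) _⟩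

theorem Relation.ReflTransGen.exists_exit {α : Type*} {r : α → α → Prop} {p : α → Prop}
    {a b : α} (h : Relation.ReflTransGen r a b) (ha : ¬p a) (hb : p b) :
    ∃ c d, ¬p c ∧ r c d ∧ p d := by
  induction h using Relation.ReflTransGen.head_induction_on with
  | refl => exact absurd hb ha
  | @head a c hac _ ih =>
    by_cases hc : p c
    · exact ⟨a, c, ha, hac, hc⟩
    · exact ih hc

namespace RG

variable {P : Type}

structure IsEmbedding {G A : RG P} (ι : G.R → A.R) : Prop where
  injective : Function.Injective ι
  owner_apply : ∀ x, A.owner (ι x) = G.owner x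
  out_apply : ∀ x, A.out (ι x) = (G.out x).map ι

abbrev sum (G H : RG P) : RG P where
  R := G.R ⊕ H.R
  fintR := inferInstance
  owner := Sum.elim G.owner H.owner
  out := Sum.elim (fun x => (G.out x).map Sum.inl) (fun y => (H.out y).map Sum.inr)

theorem isEmbedding_inl (G H : RG P) : IsEmbedding (A := G.sum H) Sum.inl :=
  ⟨Sum.inl_injective, fun _ => rfl, fun _ => rfl⟩

theorem isEmbedding_inr (G H : RG P) : IsEmbedding (A := G.sum H) Sum.inr :=
  ⟨Sum.inr_injective, fun _ => rfl, fun _ => rfl⟩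

def IsClosed (A : RG P) (S : Set A.R) : Prop :=
  ∀ z ∈ S, ∀ w, A.out z = some w → w ∈ S

open Classical in
noncomputable abbrev restrict (A : RG P) (S : Set A.R) : RG P where
  R := S
  fintR := inferInstance
  owner z := A.owner z
  out z := (A.out z).bind fun w => if h : w ∈ S then some ⟨w, h⟩ else none

theorem isEmbedding_val {A : RG P} {S : Set A.R} (hS : A.IsClosed S) :
    IsEmbedding (G := A.restrict S) Subtype.val := by
  refine ⟨Subtype.val_injective, fun _ => rfl, fun (z : S) => ?_⟩
  cases h : A.out z with
  | none => simp [restrict, h]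
  | some w => simp [restrict, h, hS z z.2 w h]

theorem IsClosed.insert {A : RG P} {S : Set A.R} (hS : A.IsClosed S) {c p : A.R}
    (hc : A.out c = some p) (hp : p ∈ S) : A.IsClosed (insert c S) := by
  rintro z (rfl | hz) w hw
  · exact .inr (Option.some_inj.1 (hc.symm.trans hw) ▸ hp)
  · exact .inr (hS z hz w hw)

theorem isClosed_pair {A : RG P} {c s : A.R} (hs : A.out s = none) (hc : A.out c = some s) :
    A.IsClosed {c, s} := by
  rintro z (rfl | rfl) w hw
  · exact .inr (Option.some_inj.1 (hc.symm.trans hw)).symm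
  · simp [hs] at hw

theorem isClosed_univ (A : RG P) : A.IsClosed Set.univ := fun _ _ _ _ => trivial

theorem rgIso_of_range_eq {G G' A : RG P} {ι : G.R → A.R} {ι' : G'.R → A.R}
    (hι : IsEmbedding ι) (hι' : IsEmbedding ι') (h : Set.range ι = Set.range ι') : rgIso G G' := by
  let e : G.R ≃ G'.R := (Equiv.ofInjective ι hι.injective).trans
    ((Equiv.setCongr h).trans (Equiv.ofInjective ι' hι'.injective).symm)
  have he : ∀ x, ι' (e x) = ι x := fun x => by
    simp [e, Equiv.apply_ofInjective_symm]
  refine ⟨e, fun x => ⟨?_, ?_⟩⟩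
  · rw [← hι'.owner_apply, he, hι.owner_apply]
  · apply Option.map_injective hι'.injective
    rw [← hι'.out_apply, he, hι.out_apply, Option.map_map]
    exact Option.map_congr fun y _ => (he y).symm

structure IsIsolatedEdge (G : RG P) (r t : G.R) : Prop where
  out_source : G.out r = some t
  out_target : G.out t = none
  not_out_eq_source : ∀ x, G.out x ≠ some r
  eq_of_out_eq_target : ∀ x, G.out x = some t → x = r

theorem IsIsolatedEdge.comap {G A : RG P} {ι : G.R → A.R} (hι : IsEmbedding ι) {r t : G.R}
    (h : A.IsIsolatedEdge (ι r) (ι t)) : G.IsIsolatedEdge r t := by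
  have out_iff : ∀ x y, G.out x = some y ↔ A.out (ι x) = some (ι y) := fun x y => by
    rw [hι.out_apply, Option.map_eq_some_iff]
    exact ⟨fun hx => ⟨y, hx, rfl⟩, fun ⟨z, hz, hzy⟩ => hι.injective hzy ▸ hz⟩
  refine ⟨(out_iff r t).2 h.out_source, ?_,
    fun x hx => h.not_out_eq_source (ι x) ((out_iff x r).1 hx),
    fun x hx => hι.injective (h.eq_of_out_eq_target (ι x) ((out_iff x t).1 hx))⟩
  simpa [hι.out_apply] using h.out_target

theorem IsIsolatedEdge.sum_inr {G H : RG P} {y t : H.R} (h : H.IsIsolatedEdge y t) :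
    (G.sum H).IsIsolatedEdge (Sum.inr y) (Sum.inr t) := by
  refine ⟨by simp [h.out_source], by simp [h.out_target], ?_, ?_⟩ <;>
    rintro (x | x) hx <;> simp at hx
  · exact h.not_out_eq_source x hx
  · rw [h.eq_of_out_eq_target x hx]

theorem isIsolatedEdge_of_isSimple {G : RG P} (hG : isSimple G) {y t : G.R} (h : G.out y = some t) :
    G.IsIsolatedEdge y t where
  out_source := h
  out_target := hG.1 y t h
  not_out_eq_source x hx := by simp [hG.1 x y hx] at h
  eq_of_out_eq_target x hx := (hG.2 t (hG.1 y t h)).unique hx h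

theorem IsIsolatedEdge.mem_revRemoved_iff {G : RG P} {r t : G.R} (h : G.IsIsolatedEdge r t)
    (x : G.R) : x ∈ revRemoved G r t ↔ x = r ∨ x = t :=
  or_congr_right ⟨And.left, fun hx => ⟨hx, fun y hy hyt => hy (h.eq_of_out_eq_target y hyt)⟩⟩

theorem IsIsolatedEdge.isSinkOf {G : RG P} {r t : G.R} (h : G.IsIsolatedEdge r t) :
    isSinkOf G r t :=
  ⟨.single h.out_source, h.out_target⟩

theorem IsIsolatedEdge.source_eq {G : RG P} {y t y' t' z : G.R} (h : G.IsIsolatedEdge y t)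
    (h' : G.IsIsolatedEdge y' t') (hz : z = y ∨ z = t) (hz' : z = y' ∨ z = t') : y = y' := by
  rcases hz with rfl | rfl <;> rcases hz' with hz' | hz'
  · exact hz'
  · exact absurd (hz' ▸ h'.out_source) (h.not_out_eq_source y')
  · exact absurd (hz' ▸ h.out_source) (h'.not_out_eq_source y)
  · exact h'.eq_of_out_eq_target y (hz' ▸ h.out_source)

section Reversal

variable {G G' A : RG P} {ι : G.R → A.R} {ι' : G'.R → A.R}

theorem IsEmbedding.out_invFun_comp [Nonempty G'.R] (hι : IsEmbedding ι) (hι' : IsEmbedding ι')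
    {x : G.R} (hx : ι x ∈ Set.range ι') (hy : ∀ y, G.out x = some y → ι y ∈ Set.range ι') :
    G'.out (Function.invFun ι' (ι x)) = (G.out x).map (Function.invFun ι' ∘ ι) := by
  apply Option.map_injective hι'.injective
  rw [← hι'.out_apply, Function.invFun_eq hx, hι.out_apply, Option.map_map]
  cases h : G.out x with
  | none => rfl
  | some y => simp [Function.invFun_eq (hy y h)]

theorem IsIsolatedEdge.invFun_comp_survivors [Nonempty G'.R] {r t : G.R} (h : G.IsIsolatedEdge r t)
    (hι : IsEmbedding ι) (hι' : IsEmbedding ι')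
    (hsurv : ∀ x, x ≠ r → x ≠ t → ι x ∈ Set.range ι') :
    (∀ x, x ∉ revRemoved G r t → ι' (Function.invFun ι' (ι x)) = ι x) ∧
    (∀ x y, x ∉ revRemoved G r t → y ∉ revRemoved G r t →
      (Function.invFun ι' (ι x) = Function.invFun ι' (ι y) ↔ x = y)) ∧
    (∀ x, x ∉ revRemoved G r t → G'.owner (Function.invFun ι' (ι x)) = G.owner x ∧
      G'.out (Function.invFun ι' (ι x)) = (G.out x).map (Function.invFun ι' ∘ ι)) := by
  simp only [h.mem_revRemoved_iff, not_or]
  have hF : ∀ x, x ≠ r ∧ x ≠ t → ι' (Function.invFun ι' (ι x)) = ι x :=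
    fun x hx => Function.invFun_eq (hsurv x hx.1 hx.2)
  refine ⟨hF, fun x y hx hy => ⟨fun hxy => hι.injective ?_, fun hxy => hxy ▸ rfl⟩,
    fun x hx => ⟨?_, ?_⟩⟩
  · rw [← hF x hx, ← hF y hy, hxy]
  · rw [← hι'.owner_apply, hF x hx, hι.owner_apply]
  · refine hι.out_invFun_comp hι' (hsurv x hx.1 hx.2) fun y hy => hsurv y ?_ ?_
    · rintro rfl
      exact h.not_out_eq_source x hy
    · rintro rfl
      exact hx.1 (h.eq_of_out_eq_target x hy)

theorem relayReversal_of_sendExisting (hι : IsEmbedding ι) (hι' : IsEmbedding ι') {r t s₀ : G.R}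
    {n : G'.R} (h : G.IsIsolatedEdge r t) (hs₀ : G.owner s₀ = G.owner r) (hs₀r : s₀ ≠ r)
    (hs₀t : s₀ ≠ t) (hn_owner : G'.owner n = G.owner t) (hn_out : A.out (ι' n) = some (ι s₀))
    (hn : ∀ x, ι x ≠ ι' n)
    (hrange : ∀ z, z ∈ Set.range ι' ↔ z = ι' n ∨ ∃ x, x ≠ r ∧ x ≠ t ∧ ι x = z) :
    relayReversal G G' := by
  have : Nonempty G'.R := ⟨n⟩
  have hrem : ∀ x, x ∉ revRemoved G r t ↔ x ≠ r ∧ x ≠ t := by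
    simp [h.mem_revRemoved_iff]
  obtain ⟨hF, hinj, hpres⟩ := h.invFun_comp_survivors hι hι' fun x hr ht =>
    (hrange _).2 (Or.inr ⟨x, hr, ht, rfl⟩)
  refine ⟨G.owner r, r, t, rfl, h.not_out_eq_source, h.isSinkOf,
    Or.inl ⟨s₀, n, Function.invFun ι' ∘ ι, hs₀r, hs₀, (hrem s₀).2 ⟨hs₀r, hs₀t⟩, hinj, ?_,
      fun x hx hxn => hn x ?_, hpres, hn_owner, ?_⟩⟩
  · intro z
    obtain hz | ⟨x, hr, ht, hx⟩ := (hrange (ι' z)).1 ⟨z, rfl⟩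
    · exact Or.inl (hι'.injective hz)
    · have hx' := (hrem x).2 ⟨hr, ht⟩
      exact Or.inr ⟨x, hx', hι'.injective (by rw [Function.comp_apply, hF x hx', hx])⟩
  · rw [← hF x hx, ← hxn]
    rfl
  · apply Option.map_injective hι'.injective
    rw [← hι'.out_apply, hn_out, Option.map_some, Function.comp_apply,
      hF s₀ ((hrem s₀).2 ⟨hs₀r, hs₀t⟩)]

theorem relayReversal_of_sendFresh (hι : IsEmbedding ι) (hι' : IsEmbedding ι') {r t : G.R}
    {q q' : G'.R} (h : G.IsIsolatedEdge r t) (hq_owner : G'.owner q = G.owner r)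
    (hq_out : A.out (ι' q) = none) (hq'_owner : G'.owner q' = G.owner t)
    (hq'_out : A.out (ι' q') = some (ι' q)) (hq : ∀ x, ι x ≠ ι' q) (hq' : ∀ x, ι x ≠ ι' q')
    (hrange : ∀ z, z ∈ Set.range ι' ↔ z = ι' q ∨ z = ι' q' ∨ ∃ x, x ≠ r ∧ x ≠ t ∧ ι x = z) :
    relayReversal G G' := by
  have : Nonempty G'.R := ⟨q⟩
  have hrem : ∀ x, x ∉ revRemoved G r t ↔ x ≠ r ∧ x ≠ t := by
    simp [h.mem_revRemoved_iff]
  obtain ⟨hF, hinj, hpres⟩ := h.invFun_comp_survivors hι hι' fun x hr ht =>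
    (hrange _).2 (Or.inr (Or.inr ⟨x, hr, ht, rfl⟩))
  have hq'q : q ≠ q' := by
    rintro rfl
    simp [hq_out] at hq'_out
  refine ⟨G.owner r, r, t, rfl, h.not_out_eq_source, h.isSinkOf,
    Or.inr ⟨q, q', Function.invFun ι' ∘ ι, hq'q, hinj, ?_,
      fun x hx => ⟨fun hxq => hq x ?_, fun hxq => hq' x ?_⟩, hpres, hq_owner, ?_, hq'_owner, ?_⟩⟩
  · intro z
    obtain hz | hz | ⟨x, hr, ht, hx⟩ := (hrange (ι' z)).1 ⟨z, rfl⟩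
    · exact Or.inl (hι'.injective hz)
    · exact Or.inr (Or.inl (hι'.injective hz))
    · have hx' := (hrem x).2 ⟨hr, ht⟩
      exact Or.inr (Or.inr ⟨x, hx', hι'.injective (by rw [Function.comp_apply, hF x hx', hx])⟩)
  · rw [← hF x hx, ← hxq]
    rfl
  · rw [← hF x hx, ← hxq]
    rfl
  · simpa [hι'.out_apply] using hq_out
  · apply Option.map_injective hι'.injective
    rw [← hι'.out_apply, hq'_out, Option.map_some]

end Reversal

end RG

section Broadcast

variable {P : Type}

/-- `τ z` is the relay of `T` served by the edge `y → t` of `G₂` that contains `z`. -/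
structure IsTreeLabelling (G2 GT : RG P) (τ : G2.R → GT.R) : Prop where
  eq_of_out_eq_some : ∀ y t, G2.out y = some t → τ t = τ y
  isSome_out : ∀ z, (GT.out (τ z)).isSome
  exists_edge : ∀ c p, GT.out c = some p → ∃ y t, G2.out y = some t ∧
    G2.owner y = GT.owner p ∧ G2.owner t = GT.owner c ∧ ∀ z, τ z = c ↔ z = y ∨ z = t

theorem exists_isTreeLabelling {G2 GT : RG P} (hG2 : isSimple G2) (hcpg : cpg G2 = tEdges GT) :
    ∃ τ, IsTreeLabelling G2 GT τ := by
  obtain ⟨e, he⟩ := exists_equiv_isSome_of_filterMap_univ_eq hcpg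
  have hedge : ∀ z, ∃ y t, G2.out y = some t ∧ (z = y ∨ z = t) := fun z => by
    cases h : G2.out z with
    | some t => exact ⟨z, t, h, .inl rfl⟩
    | none =>
      obtain ⟨y, hy, -⟩ := hG2.2 z h
      exact ⟨y, z, hy, .inr rfl⟩
  choose d tgt hdt hd using hedge
  have hd_iff : ∀ y t, G2.out y = some t → ∀ z, d z = y ↔ z = y ∨ z = t := by
    intro y t hy z
    refine ⟨fun hzy => ?_, (RG.isIsolatedEdge_of_isSimple hG2 (hdt z)).source_eq
      (RG.isIsolatedEdge_of_isSimple hG2 hy) (hd z)⟩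
    subst hzy
    rw [← Option.some_inj.1 ((hdt z).symm.trans hy)]
    exact hd z
  let τ : G2.R → GT.R := fun z => (e ⟨d z, by simp [hdt z]⟩).1
  refine ⟨τ, fun y t hy => ?_, fun z => by simpa using (e ⟨d z, _⟩).2, fun c p hc => ?_⟩
  · simp only [τ, (hd_iff y t hy t).2 (.inr rfl), (hd_iff y t hy y).2 (.inl rfl)]
  · have hcs : ((GT.out c).map fun p => (GT.owner p, GT.owner c)).isSome := by simp [hc]
    generalize hy : e.symm ⟨c, hcs⟩ = a
    obtain ⟨t, ht⟩ := Option.isSome_iff_exists.1 (by simpa using a.2)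
    have hea : e a = ⟨c, hcs⟩ := by rw [← hy, e.apply_symm_apply]
    have hfy := he a
    simp only [hea, hc, ht, Option.map_some, Option.some_inj, Prod.mk.injEq] at hfy
    refine ⟨a, t, ht, hfy.1.symm, hfy.2.symm, fun z => ?_⟩
    rw [← hd_iff a t ht z, ← hy]
    exact ⟨fun h => congrArg Subtype.val
        (e.eq_symm_apply.2 (Subtype.ext h : e ⟨d z, _⟩ = ⟨c, hcs⟩)),
      fun h => by simp only [τ, show (⟨d z, _⟩ : {a // _}) = e.symm ⟨c, hcs⟩ from Subtype.ext h,
        e.apply_symm_apply]⟩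

variable {GT G2 : RG P} {τ : G2.R → GT.R}

def liveSet (τ : G2.R → GT.R) (D : Finset GT.R) : Set (GT.R ⊕ G2.R) :=
  {z | Sum.elim (· ∈ D) (fun y => τ y ∉ D) z}

@[simp]
theorem mem_liveSet_inl {D : Finset GT.R} {x : GT.R} :
    (Sum.inl x : GT.R ⊕ G2.R) ∈ liveSet τ D ↔ x ∈ D := Iff.rfl

@[simp]
theorem mem_liveSet_inr {D : Finset GT.R} {y : G2.R} : Sum.inr y ∈ liveSet τ D ↔ τ y ∉ D :=
  Iff.rfl

noncomputable abbrev stage (τ : G2.R → GT.R) (D : Finset GT.R) : RG P :=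
  (GT.sum G2).restrict (liveSet τ D)

theorem isClosed_liveSet (hτ : IsTreeLabelling G2 GT τ) {D : Finset GT.R} (hD : GT.IsClosed D) :
    (GT.sum G2).IsClosed (liveSet τ D) := by
  rintro (x | y) hz w hw <;>
    obtain ⟨v, hv, rfl⟩ := Option.map_eq_some_iff.1 hw
  · exact hD x hz v hv
  · show τ v ∉ D
    rwa [hτ.eq_of_out_eq_some y v hv]

theorem mem_liveSet_insert [DecidableEq GT.R] {D : Finset GT.R} {c : GT.R} {y t : G2.R}
    (hc : ∀ z, τ z = c ↔ z = y ∨ z = t) (z : GT.R ⊕ G2.R) :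
    z ∈ liveSet τ (insert c D) ↔
      z = Sum.inl c ∨ (z ∈ liveSet τ D ∧ z ≠ Sum.inr y ∧ z ≠ Sum.inr t) := by
  rcases z with x | z <;> simp [hc, and_comm]

theorem relayReversal_stage_insert [DecidableEq GT.R] (hτ : IsTreeLabelling G2 GT τ)
    (hG2 : isSimple G2) {D : Finset GT.R} (hD : GT.IsClosed D) {c p : GT.R} (hcD : c ∉ D)
    (hc : GT.out c = some p) (hp : p ∈ D) : relayReversal (stage τ D) (stage τ (insert c D)) := by
  obtain ⟨y, t, hyt, hy, ht, hτc⟩ := hτ.exists_edge c p hc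
  have hι := RG.isEmbedding_val (isClosed_liveSet hτ hD)
  have hι' := RG.isEmbedding_val
    (isClosed_liveSet hτ (D := insert c D) (by simpa using hD.insert hc hp))
  have hyD : (Sum.inr y : GT.R ⊕ G2.R) ∈ liveSet τ D := by simp [(hτc y).2 (.inl rfl), hcD]
  have htD : (Sum.inr t : GT.R ⊕ G2.R) ∈ liveSet τ D := by simp [(hτc t).2 (.inr rfl), hcD]
  refine RG.relayReversal_of_sendExisting hι hι' (r := ⟨_, hyD⟩) (t := ⟨_, htD⟩)
    (s₀ := ⟨Sum.inl p, hp⟩) (n := ⟨Sum.inl c, by simp⟩)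
    ((RG.isIsolatedEdge_of_isSimple hG2 hyt).sum_inr.comap hι) hy.symm
    (fun h => Sum.inl_ne_inr (congrArg Subtype.val h))
    (fun h => Sum.inl_ne_inr (congrArg Subtype.val h)) ht.symm (by simp [hc])
    (fun x hx => hcD (by simpa [hx] using x.2)) fun z => ?_
  rw [Subtype.range_coe, mem_liveSet_insert hτc]
  rcases z with x | z <;> simp [and_comm, and_assoc]

theorem relayReversal_stage_pair [DecidableEq GT.R] (hτ : IsTreeLabelling G2 GT τ)
    (hG2 : isSimple G2) {s c : GT.R} (hs : GT.out s = none) (hc : GT.out c = some s) :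
    relayReversal G2 (stage τ {c, s}) := by
  obtain ⟨y, t, hyt, hy, ht, hτc⟩ := hτ.exists_edge c s hc
  have hτs : ∀ z, τ z ≠ s := fun z h => by simpa [h, hs] using hτ.isSome_out z
  refine RG.relayReversal_of_sendFresh (RG.isEmbedding_inr GT G2)
    (RG.isEmbedding_val (isClosed_liveSet hτ (by simpa using RG.isClosed_pair hs hc)))
    (q := ⟨Sum.inl s, by simp⟩) (q' := ⟨Sum.inl c, by simp⟩)
    (RG.isIsolatedEdge_of_isSimple hG2 hyt) hy.symm (by simp [hs]) ht.symm (by simp [hc])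
    (fun _ => Sum.inr_ne_inl) (fun _ => Sum.inr_ne_inl) fun z => ?_
  rw [Subtype.range_coe, mem_liveSet_insert hτc]
  rcases z with x | z <;> simp [hτs, or_comm]

theorem reflTransGen_stage_univ [DecidableEq GT.R] (hτ : IsTreeLabelling G2 GT τ)
    (hG2 : isSimple G2) {s : GT.R}
    (hroot : ∀ r, Relation.ReflTransGen (fun a b => GT.out a = some b) r s) {D : Finset GT.R}
    (hD : GT.IsClosed D) (hs : s ∈ D) :
    Relation.ReflTransGen relayReversal (stage τ D) (stage τ Finset.univ) := by
  refine Finset.strongDownwardInduction (n := Fintype.card GT.R)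
    (p := fun D => GT.IsClosed ↑D → s ∈ D →
      Relation.ReflTransGen relayReversal (stage τ D) (stage τ Finset.univ))
    (fun D ih _ hD hs => ?_) D (Finset.card_le_univ D) hD hs
  by_cases hDu : D = Finset.univ
  · rw [hDu]
  obtain ⟨x, hx⟩ : ∃ x, x ∉ D := by simpa [Finset.eq_univ_iff_forall] using hDu
  obtain ⟨c, p, hcD, hc, hp⟩ := (hroot x).exists_exit (p := (· ∈ D)) hx hs
  exact .head (relayReversal_stage_insert hτ hG2 hD hcD hc hp)
    (ih (Finset.card_le_univ _) (Finset.ssubset_insert hcD) (by simpa using hD.insert hc hp)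
      (Finset.mem_insert_of_mem hs))

theorem rgIso_stage_univ (hτ : IsTreeLabelling G2 GT τ) : rgIso (stage τ Finset.univ) GT := by
  refine RG.rgIso_of_range_eq (RG.isEmbedding_val (isClosed_liveSet hτ ?_))
    (RG.isEmbedding_inl GT G2) ?_
  · simpa using GT.isClosed_univ
  · ext (x | y) <;> simp

end Broadcast

theorem broadcast_and_reverse_reconstructs_tree_general {P : Type} (GT G2 : RG P)
    (s : GT.R) (hroot : ∀ r : GT.R, isSinkOf GT r s)
    (hne : ∃ r : GT.R, r ≠ s)
    (hG2 : isSimple G2) (hcpg : cpg G2 = tEdges GT) :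
    ∃ G' : RG P, Relation.ReflTransGen relayReversal G2 G' ∧ rgIso G' GT := by
  classical
  obtain ⟨τ, hτ⟩ := exists_isTreeLabelling hG2 hcpg
  have hs : GT.out s = none := (hroot s).2
  obtain ⟨x, hx⟩ := hne
  obtain ⟨c, -, hc⟩ := (hroot x).1.cases_tail.resolve_left hx.symm
  exact ⟨stage τ Finset.univ, .head (relayReversal_stage_pair hτ hG2 hs hc)
    (reflTransGen_stage_univ hτ hG2 (fun r => (hroot r).1)
      (by simpa using RG.isClosed_pair hs hc) (by simp)), rgIso_stage_univ hτ⟩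

/-- Broadcast-and-reverse reconstructs a tree `T`: let `GT` be a
valid relay graph forming a tree in which every relay reaches the common sink
relay `s` (the root; `T` has at least one non-root relay), and let `G2` be a
simple relay graph in which, for every tree edge, the owner of the parent has a
direct relay to the owner of the child. Then by a finite sequence of Relay
Reversals (processing the levels of `T` in ascending order) `G2` is transformed
into a relay graph isomorphic to `GT`. -/
theorem broadcast_and_reverse_reconstructs_tree {P : Type} (GT G2 : RG P)
    (lvl : GT.R → ℕ) (hlvl : ∀ r p : GT.R, GT.out r = some p → lvl r = lvl p + 1)
    (s : GT.R) (hroot : ∀ r : GT.R, isSinkOf GT r s)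
    (hne : ∃ r : GT.R, r ≠ s)
    (hG2 : isSimple G2) (hcpg : cpg G2 = tEdges GT) :
    ∃ G' : RG P, Relation.ReflTransGen relayReversal G2 G' ∧ rgIso G' GT :=
  broadcast_and_reverse_reconstructs_tree_general GT G2 s hroot hne hG2 hcpg
end

section
/- In the process-graph model, the four rules Introduction, Delegation, Fusion, and Reversal each preserve weak connectivity of a finite directed multigraph. -/
/-- Weak connectivity of a directed multigraph given by a multiset of edges. -/
def wcM {V : Type*} (E : Multiset (V × V)) : Prop :=
  ∀ a b : V, Relation.ReflTransGen (fun x y => (x, y) ∈ E ∨ (y, x) ∈ E) a b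

/-!
Each rule only adds edges, or removes an edge `(x, y)` while leaving `x` and `y` joined by a path
of the new graph (through the surviving parallel edge, the reversed edge, or the path `u → v → w`
for Delegation). Replacing every edge of a path by such a path shows that any two vertices remain
joined.
-/

open Relation

section

variable {V : Type*}

/-- `SymmGen` unfolds to the disjunction in `wcM`, so `wcM E` is definitionally
`∀ a b, WeakReach E a b`. -/
def WeakReach (E : Multiset (V × V)) : V → V → Prop :=
  ReflTransGen (SymmGen fun x y => (x, y) ∈ E)

namespace WeakReach

variable {E : Multiset (V × V)} {x y : V}

instance : Std.Symm (WeakReach E) :=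
  inferInstanceAs (Std.Symm (ReflTransGen _))

theorem of_mem (h : (x, y) ∈ E) : WeakReach E x y :=
  .single (.of_rel h)

theorem of_mem_symm (h : (y, x) ∈ E) : WeakReach E x y :=
  .single (.of_rel_symm h)

end WeakReach

namespace wcM

variable {E E' : Multiset (V × V)}

theorem of_forall_mem (h : ∀ x y, (x, y) ∈ E → WeakReach E' x y) (hE : wcM E) : wcM E' := by
  have hstep : SymmGen (fun x y => (x, y) ∈ E) ≤ WeakReach E' := fun x y hxy =>
    hxy.elim (h x y) fun hyx => symm (h y x hyx)
  exact fun a b => reflTransGen_closed hstep a b (hE a b)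

theorem mono (hsub : E ⊆ E') (hE : wcM E) : wcM E' :=
  of_forall_mem (fun _ _ hxy => .of_mem (hsub hxy)) hE

theorem of_erase_subset [DecidableEq V] {x y : V} (hsub : E.erase (x, y) ⊆ E')
    (hxy : WeakReach E' x y) (hE : wcM E) : wcM E' := by
  refine of_forall_mem (fun a b hab => ?_) hE
  by_cases he : (a, b) = (x, y)
  · obtain ⟨rfl, rfl⟩ := Prod.mk.inj he
    exact hxy
  · exact .of_mem (hsub ((Multiset.mem_erase_of_ne he).mpr hab))

end wcM

end

theorem process_rules_preserve_weak_connectivity_general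
    {V : Type*} [DecidableEq V] :
    -- Introduction
    (∀ (E : Multiset (V × V)) (u v w : V), (u, v) ∈ E → (u, w) ∈ E → v ≠ w →
      wcM E → wcM ((v, w) ::ₘ E)) ∧
    -- Delegation
    (∀ (E : Multiset (V × V)) (u v w : V), u ≠ v → u ≠ w → v ≠ w →
      (u, v) ∈ E → (u, w) ∈ E → wcM E → wcM ((v, w) ::ₘ E.erase (u, w))) ∧
    -- Fusion
    (∀ (E : Multiset (V × V)) (u v : V), 2 ≤ E.count (u, v) →
      wcM E → wcM (E.erase (u, v))) ∧
    -- Reversal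
    (∀ (E : Multiset (V × V)) (u v : V), (u, v) ∈ E →
      wcM E → wcM ((v, u) ::ₘ E.erase (u, v))) := by
  refine ⟨?intro, ?delegation, ?fusion, ?reversal⟩
  case intro =>
    exact fun E _ v w _ _ _ => wcM.mono (Multiset.subset_cons E (v, w))
  case delegation =>
    intro E u v w _ _ hvw huv _
    have huv' : (u, v) ∈ E.erase (u, w) :=
      (Multiset.mem_erase_of_ne (by simpa using hvw)).mpr huv
    exact wcM.of_erase_subset (Multiset.subset_cons _ _)
      ((WeakReach.of_mem (Multiset.mem_cons_of_mem huv')).trans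
        (WeakReach.of_mem (Multiset.mem_cons_self _ _)))
  case fusion =>
    intro E u v hcount
    have huv : (u, v) ∈ E.erase (u, v) := by
      rw [← Multiset.count_pos, Multiset.count_erase_self]
      omega
    exact wcM.of_erase_subset (Multiset.Subset.refl _) (WeakReach.of_mem huv)
  case reversal =>
    exact fun E u v _ => wcM.of_erase_subset (Multiset.subset_cons _ _)
      (WeakReach.of_mem_symm (Multiset.mem_cons_self _ _))

/-- In the process-graph model, the four rules Introduction,
Delegation, Fusion and Reversal each preserve weak connectivity of a finite
directed multigraph. -/
theorem process_rules_preserve_weak_connectivity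
    {V : Type*} [Fintype V] [DecidableEq V] :
    -- Introduction
    (∀ (E : Multiset (V × V)) (u v w : V), (u, v) ∈ E → (u, w) ∈ E → v ≠ w →
      wcM E → wcM ((v, w) ::ₘ E)) ∧
    -- Delegation
    (∀ (E : Multiset (V × V)) (u v w : V), u ≠ v → u ≠ w → v ≠ w →
      (u, v) ∈ E → (u, w) ∈ E → wcM E → wcM ((v, w) ::ₘ E.erase (u, w))) ∧
    -- Fusion
    (∀ (E : Multiset (V × V)) (u v : V), 2 ≤ E.count (u, v) →
      wcM E → wcM (E.erase (u, v))) ∧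
    -- Reversal
    (∀ (E : Multiset (V × V)) (u v : V), (u, v) ∈ E →
      wcM E → wcM ((v, u) ::ₘ E.erase (u, v))) :=
  process_rules_preserve_weak_connectivity_general
end
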